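/- Consider a rooted DAG where each node is a sum node, product node, or leaf, and the value function V is defined recursively: V(leaf) = given positive value, V(product node) = product of children's values, V(sum node) = Σ_j w_j V(child_j) with positive weights. Then for a complete and decomposable such circuit, V(root) evaluated with all weights and leaf values set to 1 equals the number of induced trees of the circuit, where an induced tree contains the root, exactly one child of each included sum node, and all children of each included product node. -/

import Mathlib

open scoped Classical

/-- The kind of a node in a sum-product network. -/
inductive NodeKind | sum | prod | leaf
deriving DecidableEq

/-- A sum-product network (SPN) over variables `X_1, …, X_n`: a rooted DAG with `N` nodes
(indexed so that edges go from larger to smaller indices), where each node is a sum node,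
a product node, or a leaf labelled with a variable, and sum edges carry weights. -/
structure SPN (N n : ℕ) where
  kind : Fin N → NodeKind
  children : Fin N → Finset (Fin N)
  var : Fin N → Fin n
  root : Fin N
  child_lt : ∀ k, ∀ j ∈ children k, j < k
  leaf_iff : ∀ k, kind k = NodeKind.leaf ↔ children k = ∅

namespace SPN

variable {N n : ℕ}

/-- Recursive evaluation of an SPN: leaves return their given values, product nodes multiply
their children's values, sum nodes take weighted sums of their children's values. -/
noncomputable def value (S : SPN N n) (leaf : Fin N → ℝ) (w : Fin N → Fin N → ℝ) :
    Fin N → ℝ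
  | k =>
    match S.kind k with
    | NodeKind.leaf => leaf k
    | NodeKind.prod => ∏ j ∈ (S.children k).attach, value S leaf w j.1
    | NodeKind.sum => ∑ j ∈ (S.children k).attach, w k j.1 * value S leaf w j.1
  termination_by k => (k : ℕ)
  decreasing_by all_goals exact S.child_lt _ _ j.2

/-- Evaluation where the value of the node `k₀` is overridden by the free value `t`
(used to differentiate the root value with respect to the value of node `k₀`). -/
noncomputable def valueAt (S : SPN N n) (leaf : Fin N → ℝ) (w : Fin N → Fin N → ℝ)
    (k₀ : Fin N) (t : ℝ) : Fin N → ℝ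
  | k =>
    if k = k₀ then t else
      match S.kind k with
      | NodeKind.leaf => leaf k
      | NodeKind.prod => ∏ j ∈ (S.children k).attach, valueAt S leaf w k₀ t j.1
      | NodeKind.sum => ∑ j ∈ (S.children k).attach, w k j.1 * valueAt S leaf w k₀ t j.1
  termination_by k => (k : ℕ)
  decreasing_by all_goals exact S.child_lt _ _ j.2

/-- The scope of a node: the set of variables appearing below it. -/
noncomputable def scope (S : SPN N n) : Fin N → Finset (Fin n)
  | k =>
    match S.kind k with
    | NodeKind.leaf => {S.var k}
    | _ => (S.children k).attach.biUnion (fun j => scope S j.1)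
  termination_by k => (k : ℕ)
  decreasing_by all_goals exact S.child_lt _ _ j.2

/-- An SPN is complete if all children of a sum node have the same scope. -/
def Complete (S : SPN N n) : Prop :=
  ∀ k, S.kind k = NodeKind.sum →
    ∀ j₁ ∈ S.children k, ∀ j₂ ∈ S.children k, S.scope j₁ = S.scope j₂

/-- An SPN is decomposable if distinct children of a product node have disjoint scopes. -/
def Decomposable (S : SPN N n) : Prop :=
  ∀ k, S.kind k = NodeKind.prod →
    ∀ j₁ ∈ S.children k, ∀ j₂ ∈ S.children k, j₁ ≠ j₂ →
      Disjoint (S.scope j₁) (S.scope j₂)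

/-- `(TV, TE)` is an induced tree of the SPN `S`: it contains the root; its edges are edges of
`S` between its nodes; every sum node in it has exactly one outgoing edge in it; every product
node in it keeps all its outgoing edges; and every non-root node in it is the endpoint of one
of its edges. -/
def IsInducedTree (S : SPN N n) (TV : Finset (Fin N)) (TE : Finset (Fin N × Fin N)) : Prop :=
  S.root ∈ TV ∧
  (∀ e ∈ TE, e.1 ∈ TV ∧ e.2 ∈ TV ∧ e.2 ∈ S.children e.1) ∧
  (∀ k ∈ TV, S.kind k = NodeKind.sum → ∃! j, j ∈ S.children k ∧ (k, j) ∈ TE) ∧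
  (∀ k ∈ TV, S.kind k = NodeKind.prod → ∀ j ∈ S.children k, (k, j) ∈ TE) ∧
  (∀ k ∈ TV, k ≠ S.root → ∃ e ∈ TE, e.2 = k)

end SPN

/-!
Write `T(r)` for the induced trees of the network rerooted at `r`. A tree in `T(r)` at a sum
node is the edge to one child `j` glued onto a tree in `T(j)`; at a product node or a leaf it is
the edges to all children glued onto one tree in `T(j)` for each child `j`. Cutting a tree down to
the descendants of a child undoes the gluing, and at a product node the pieces are independent
because decomposability, together with the nonemptiness of every scope, makes the descendant sets
of distinct children disjoint. So `|T(r)|` obeys the recursion of the value with unit weights and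
unit leaves.
-/

namespace SPN

variable {N n : ℕ} {S : SPN N n}

variable (S) in
def Reaches : Fin N → Fin N → Prop :=
  Relation.ReflTransGen fun k j => j ∈ S.children k

theorem Reaches.le {k m : Fin N} (h : S.Reaches k m) : m ≤ k := by
  induction h with
  | refl => exact le_rfl
  | tail _ hc ih => exact (S.child_lt _ _ hc).le.trans ih

theorem children_nonempty {k : Fin N} (hk : S.kind k ≠ .leaf) : (S.children k).Nonempty :=
  Finset.nonempty_iff_ne_empty.2 fun h => hk ((S.leaf_iff k).2 h)

theorem scope_of_ne_leaf {k : Fin N} (hk : S.kind k ≠ .leaf) :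
    S.scope k = (S.children k).attach.biUnion fun j => S.scope j.1 := by
  rw [scope]
  split <;> simp_all

theorem scope_subset_of_mem_children {k j : Fin N} (hj : j ∈ S.children k) :
    S.scope j ⊆ S.scope k := by
  have hk : S.kind k ≠ .leaf := fun h => by simp [(S.leaf_iff k).1 h] at hj
  rw [scope_of_ne_leaf hk]
  exact Finset.subset_biUnion_of_mem (fun j : S.children k => S.scope j.1)
    (Finset.mem_attach _ ⟨j, hj⟩)

theorem scope_nonempty (k : Fin N) : (S.scope k).Nonempty := by
  induction k using WellFoundedLT.induction with
  | _ k ih =>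
    by_cases hk : S.kind k = .leaf
    · rw [scope, hk]
      exact Finset.singleton_nonempty _
    · obtain ⟨j, hj⟩ := children_nonempty hk
      exact (ih j (S.child_lt k j hj)).mono (scope_subset_of_mem_children hj)

theorem Reaches.scope_subset {k m : Fin N} (h : S.Reaches k m) : S.scope m ⊆ S.scope k := by
  induction h with
  | refl => exact subset_rfl
  | tail _ hc ih => exact (scope_subset_of_mem_children hc).trans ih

variable (S) in
def DisjointDescendants (C : Finset (Fin N)) : Prop :=
  ∀ j₁ ∈ C, ∀ j₂ ∈ C, ∀ m, S.Reaches j₁ m → S.Reaches j₂ m → j₁ = j₂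

theorem disjointDescendants_singleton (j : Fin N) : S.DisjointDescendants {j} := by
  simp [DisjointDescendants]

theorem Decomposable.disjointDescendants_children (hD : S.Decomposable) {k : Fin N}
    (hk : S.kind k ≠ .sum) : S.DisjointDescendants (S.children k) := by
  intro j₁ hj₁ j₂ hj₂ m h₁ h₂
  by_contra hne
  have hprod : S.kind k = .prod := by
    cases hkk : S.kind k
    · exact absurd hkk hk
    · rfl
    · simp [(S.leaf_iff k).1 hkk] at hj₁
  obtain ⟨x, hx⟩ := S.scope_nonempty m
  exact Finset.disjoint_left.1 (hD k hprod j₁ hj₁ j₂ hj₂ hne) (h₁.scope_subset hx)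
    (h₂.scope_subset hx)

variable (S) in
def IsInducedTreeAt (r : Fin N) : Finset (Fin N) → Finset (Fin N × Fin N) → Prop :=
  IsInducedTree { S with root := r }

variable (S) in
def inducedTrees (r : Fin N) : Set (Finset (Fin N) × Finset (Fin N × Fin N)) :=
  {p | S.IsInducedTreeAt r p.1 p.2}

namespace IsInducedTreeAt

variable {r : Fin N} {TV : Finset (Fin N)} {TE : Finset (Fin N × Fin N)}

theorem fst_mem (h : S.IsInducedTreeAt r TV TE) {e : Fin N × Fin N} (he : e ∈ TE) :
    e.1 ∈ TV :=
  (h.2.1 e he).1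

theorem eq_or_reaches_of_mem (h : S.IsInducedTreeAt r TV TE) {m : Fin N} (hm : m ∈ TV) :
    m = r ∨ ∃ c, (r, c) ∈ TE ∧ S.Reaches c m := by
  induction m using WellFoundedGT.induction with
  | _ m ih =>
    by_cases hmr : m = r
    · exact .inl hmr
    obtain ⟨e, he, rfl⟩ := h.2.2.2.2 m hm hmr
    obtain ⟨he₁, -, hchild⟩ := h.2.1 e he
    refine .inr ?_
    rcases ih e.1 (S.child_lt _ _ hchild) he₁ with hr | ⟨c, hc, hreach⟩
    · exact ⟨e.2, hr ▸ he, .refl⟩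
    · exact ⟨c, hc, hreach.tail hchild⟩

theorem reaches (h : S.IsInducedTreeAt r TV TE) {m : Fin N} (hm : m ∈ TV) : S.Reaches r m := by
  rcases h.eq_or_reaches_of_mem hm with rfl | ⟨c, hc, hreach⟩
  · exact .refl
  · exact .head (h.2.1 _ hc).2.2 hreach

theorem notMem_of_lt (h : S.IsInducedTreeAt r TV TE) {k : Fin N} (hk : r < k) : k ∉ TV :=
  fun hm => (h.reaches hm).le.not_gt hk

theorem fst_notMem_of_lt (h : S.IsInducedTreeAt r TV TE) {k x : Fin N} (hk : r < k) :
    (k, x) ∉ TE :=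
  fun he => h.notMem_of_lt hk (h.fst_mem he)

end IsInducedTreeAt

variable (S) in
noncomputable def restrict (j : Fin N) (p : Finset (Fin N) × Finset (Fin N × Fin N)) :
    Finset (Fin N) × Finset (Fin N × Fin N) :=
  (p.1.filter (S.Reaches j), p.2.filter fun e => S.Reaches j e.1)

def glue (r : Fin N) (C : Finset (Fin N))
    (f : Fin N → Finset (Fin N) × Finset (Fin N × Fin N)) :
    Finset (Fin N) × Finset (Fin N × Fin N) :=
  (insert r (C.biUnion fun j => (f j).1), C.image (r, ·) ∪ C.biUnion fun j => (f j).2)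

section glue

variable {r : Fin N} {C : Finset (Fin N)} {f : Fin N → Finset (Fin N) × Finset (Fin N × Fin N)}

theorem glue_congr {g : Fin N → Finset (Fin N) × Finset (Fin N × Fin N)}
    (h : ∀ j ∈ C, f j = g j) : glue r C f = glue r C g := by
  simp only [glue, Finset.biUnion_congr rfl fun j hj => congrArg Prod.fst (h j hj),
    Finset.biUnion_congr rfl fun j hj => congrArg Prod.snd (h j hj)]

theorem root_edge_mem_glue_iff (hCr : C ⊆ S.children r)
    (hf : ∀ j ∈ C, f j ∈ S.inducedTrees j) {x : Fin N} :
    (r, x) ∈ (glue r C f).2 ↔ x ∈ C := by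
  simp only [glue, Finset.mem_union, Finset.mem_image, Prod.mk.injEq, true_and,
    exists_eq_right, Finset.mem_biUnion, or_iff_left_iff_imp, forall_exists_index, and_imp]
  intro j hj he
  exact absurd he ((hf j hj).fst_notMem_of_lt (S.child_lt r j (hCr hj)))

theorem edge_mem_glue_iff (hCr : C ⊆ S.children r) (hsep : S.DisjointDescendants C)
    (hf : ∀ j ∈ C, f j ∈ S.inducedTrees j) {j k x : Fin N} (hj : j ∈ C)
    (hk : k ∈ (f j).1) :
    (k, x) ∈ (glue r C f).2 ↔ (k, x) ∈ (f j).2 := by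
  simp only [glue, Finset.mem_union, Finset.mem_image, Prod.mk.injEq, Finset.mem_biUnion]
  refine ⟨?_, fun he => .inr ⟨j, hj, he⟩⟩
  rintro (⟨_, _, rfl, -⟩ | ⟨j', hj', he⟩)
  · exact absurd hk ((hf j hj).notMem_of_lt (S.child_lt _ j (hCr hj)))
  · obtain rfl := hsep j hj j' hj' k ((hf j hj).reaches hk)
      ((hf j' hj').reaches ((hf j' hj').fst_mem he))
    exact he

theorem glue_mem_inducedTrees (hCr : C ⊆ S.children r) (hsep : S.DisjointDescendants C)
    (hf : ∀ j ∈ C, f j ∈ S.inducedTrees j) (hsum : S.kind r = .sum → ∃! j, j ∈ C)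
    (hprod : S.kind r = .prod → S.children r ⊆ C) : glue r C f ∈ S.inducedTrees r := by
  have mem_fst_iff {k} : k ∈ (glue r C f).1 ↔ k = r ∨ ∃ j ∈ C, k ∈ (f j).1 := by
    simp [glue]
  have mem_fst {j} (hj : j ∈ C) {k} (hk : k ∈ (f j).1) : k ∈ (glue r C f).1 :=
    mem_fst_iff.2 (.inr ⟨j, hj, hk⟩)
  refine ⟨Finset.mem_insert_self _ _, ?edges, ?sum, ?prod, ?in_edge⟩
  case edges =>
    simp only [glue, Finset.mem_union, Finset.mem_image, Finset.mem_biUnion]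
    rintro e (⟨j, hj, rfl⟩ | ⟨j, hj, he⟩)
    · exact ⟨Finset.mem_insert_self _ _, mem_fst hj (hf j hj).1, hCr hj⟩
    · obtain ⟨h₁, h₂, h₃⟩ := (hf j hj).2.1 e he
      exact ⟨mem_fst hj h₁, mem_fst hj h₂, h₃⟩
  case sum =>
    intro k hk hks
    rcases mem_fst_iff.1 hk with rfl | ⟨j, hj, hk⟩
    · obtain ⟨j, hj, huniq⟩ := hsum hks
      exact ⟨j, ⟨hCr hj, (root_edge_mem_glue_iff hCr hf).2 hj⟩,
        fun x hx => huniq x ((root_edge_mem_glue_iff hCr hf).1 hx.2)⟩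
    · simp only [edge_mem_glue_iff hCr hsep hf hj hk]
      exact (hf j hj).2.2.1 k hk hks
  case prod =>
    intro k hk hkp x hx
    rcases mem_fst_iff.1 hk with rfl | ⟨j, hj, hk⟩
    · exact (root_edge_mem_glue_iff hCr hf).2 (hprod hkp hx)
    · exact (edge_mem_glue_iff hCr hsep hf hj hk).2 ((hf j hj).2.2.2.1 k hk hkp x hx)
  case in_edge =>
    intro k hk hkr
    obtain ⟨j, hj, hk⟩ := (mem_fst_iff.1 hk).resolve_left hkr
    by_cases hkj : k = j
    · exact ⟨(r, k), (root_edge_mem_glue_iff hCr hf).2 (hkj ▸ hj), rfl⟩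
    · obtain ⟨e, he, rfl⟩ := (hf j hj).2.2.2.2 k hk hkj
      exact ⟨e, Finset.mem_union_right _ (Finset.mem_biUnion.2 ⟨j, hj, he⟩), rfl⟩

theorem restrict_glue (hCr : C ⊆ S.children r) (hsep : S.DisjointDescendants C)
    (hf : ∀ j ∈ C, f j ∈ S.inducedTrees j) {j : Fin N} (hj : j ∈ C) :
    S.restrict j (glue r C f) = f j := by
  have hrj : ¬ S.Reaches j r := fun h => (S.child_lt r j (hCr hj)).not_ge h.le
  have of_reaches {j'} (hj' : j' ∈ C) {m} (hm : m ∈ (f j').1) (hjm : S.Reaches j m) : j' = j :=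
    hsep j' hj' j hj m ((hf j' hj').reaches hm) hjm
  ext x
  · simp only [restrict, glue, Finset.mem_filter, Finset.mem_insert, Finset.mem_biUnion]
    constructor
    · rintro ⟨rfl | ⟨j', hj', hx⟩, hjx⟩
      · exact absurd hjx hrj
      · exact of_reaches hj' hx hjx ▸ hx
    · exact fun hx => ⟨.inr ⟨j, hj, hx⟩, (hf j hj).reaches hx⟩
  · simp only [restrict, glue, Finset.mem_filter, Finset.mem_union, Finset.mem_image,
      Finset.mem_biUnion]
    constructor
    · rintro ⟨⟨_, -, rfl⟩ | ⟨j', hj', hx⟩, hjx⟩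
      · exact absurd hjx hrj
      · exact of_reaches hj' ((hf j' hj').fst_mem hx) hjx ▸ hx
    · exact fun hx => ⟨.inr ⟨j, hj, hx⟩, (hf j hj).reaches ((hf j hj).fst_mem hx)⟩

theorem eq_of_glue_eq (hCr : C ⊆ S.children r) (hsep : S.DisjointDescendants C)
    {g : Fin N → Finset (Fin N) × Finset (Fin N × Fin N)}
    (hf : ∀ j ∈ C, f j ∈ S.inducedTrees j) (hg : ∀ j ∈ C, g j ∈ S.inducedTrees j)
    (h : glue r C f = glue r C g) {j : Fin N} (hj : j ∈ C) : f j = g j := by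
  rw [← restrict_glue hCr hsep hf hj, h, restrict_glue hCr hsep hg hj]

end glue

section restrict

variable {r : Fin N} {C : Finset (Fin N)} {p : Finset (Fin N) × Finset (Fin N × Fin N)}

theorem restrict_mem_inducedTrees (hp : p ∈ S.inducedTrees r)
    (hC : ∀ x, (r, x) ∈ p.2 ↔ x ∈ C) (hsep : S.DisjointDescendants C) {j : Fin N}
    (hj : j ∈ C) : S.restrict j p ∈ S.inducedTrees j := by
  have hjr : j ∈ S.children r := (hp.2.1 _ ((hC j).2 hj)).2.2
  simp only [inducedTrees, IsInducedTreeAt, IsInducedTree, restrict, Finset.mem_filter,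
    Set.mem_ofPred_eq]
  refine ⟨⟨(hp.2.1 _ ((hC j).2 hj)).2.1, .refl⟩, ?edges, ?sum, ?prod, ?in_edge⟩
  case edges =>
    rintro e ⟨he, hje⟩
    obtain ⟨h₁, h₂, h₃⟩ := hp.2.1 e he
    exact ⟨⟨h₁, hje⟩, ⟨h₂, hje.tail h₃⟩, h₃⟩
  case sum =>
    rintro k ⟨hk, hjk⟩ hks
    obtain ⟨x, hx, huniq⟩ := hp.2.2.1 k hk hks
    exact ⟨x, ⟨hx.1, hx.2, hjk⟩, fun y hy => huniq y ⟨hy.1, hy.2.1⟩⟩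
  case prod =>
    rintro k ⟨hk, hjk⟩ hkp x hx
    exact ⟨hp.2.2.2.1 k hk hkp x hx, hjk⟩
  case in_edge =>
    rintro k ⟨hk, hjk⟩ hkj
    have hkr : k ≠ r := fun h => (S.child_lt r j hjr).not_ge (h ▸ hjk.le)
    obtain ⟨e, he, rfl⟩ := hp.2.2.2.2 k hk hkr
    refine ⟨e, ⟨he, ?_⟩, rfl⟩
    rcases hp.eq_or_reaches_of_mem (hp.fst_mem he) with h | ⟨c, hc, hce⟩
    · exact absurd (hsep _ ((hC _).1 (h ▸ he)) j hj _ .refl hjk) hkj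
    · exact hsep c ((hC c).1 hc) j hj _ (hce.tail (hp.2.1 e he).2.2) hjk ▸ hce

theorem glue_restrict (hp : p ∈ S.inducedTrees r) (hC : ∀ x, (r, x) ∈ p.2 ↔ x ∈ C) :
    glue r C (S.restrict · p) = p := by
  ext x
  · simp only [restrict, glue, Finset.mem_filter, Finset.mem_insert, Finset.mem_biUnion]
    constructor
    · rintro (rfl | ⟨j, -, hx, -⟩)
      exacts [hp.1, hx]
    · intro hx
      rcases hp.eq_or_reaches_of_mem hx with h | ⟨c, hc, hcx⟩
      exacts [.inl h, .inr ⟨c, (hC c).1 hc, hx, hcx⟩]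
  · simp only [restrict, glue, Finset.mem_filter, Finset.mem_union, Finset.mem_image,
      Finset.mem_biUnion]
    constructor
    · rintro (⟨j, hj, rfl⟩ | ⟨j, -, hx, -⟩)
      exacts [(hC j).2 hj, hx]
    · intro hx
      rcases hp.eq_or_reaches_of_mem (hp.fst_mem hx) with h | ⟨c, hc, hcx⟩
      · exact .inl ⟨x.2, (hC _).1 (h ▸ hx), by rw [← h]⟩
      · exact .inr ⟨c, (hC c).1 hc, hx, hcx⟩

end restrict

theorem card_inducedTrees_of_sum {r : Fin N} (hr : S.kind r = .sum) :
    Nat.card (S.inducedTrees r) = ∑ j ∈ S.children r, Nat.card (S.inducedTrees j) := by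
  have hCr (j : S.children r) : {j.1} ⊆ S.children r := Finset.singleton_subset_iff.2 j.2
  have hf (j : S.children r) (q : S.inducedTrees j) : ∀ x ∈ ({j.1} : Finset (Fin N)),
      (fun _ => q.1) x ∈ S.inducedTrees x := by
    simp
  let Φ : (Σ j : S.children r, S.inducedTrees j) → S.inducedTrees r := fun q =>
    ⟨glue r {q.1.1} fun _ => q.2.1,
      glue_mem_inducedTrees (hCr q.1) (disjointDescendants_singleton _) (hf q.1 q.2)
        (fun _ => ⟨q.1.1, by simp⟩) (fun h => absurd (hr.symm.trans h) (by decide))⟩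
  have hinj : Φ.Injective := by
    rintro ⟨j, q⟩ ⟨j', q'⟩ h
    replace h : glue r {j.1} (fun _ => q.1) = glue r {j'.1} (fun _ => q'.1) :=
      congrArg Subtype.val h
    obtain rfl : j = j' := Subtype.ext <| Finset.singleton_injective <| Finset.ext fun x => by
      rw [← root_edge_mem_glue_iff (hCr j) (hf j q), h,
        root_edge_mem_glue_iff (hCr j') (hf j' q')]
    exact Sigma.subtype_ext rfl <| eq_of_glue_eq (hCr j) (disjointDescendants_singleton _)
      (hf j q) (hf j q') h (Finset.mem_singleton_self _)
  have hsurj : Φ.Surjective := by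
    rintro ⟨p, hp⟩
    obtain ⟨j, ⟨hj, hjp⟩, huniq⟩ := hp.2.2.1 r hp.1 hr
    have hC (x : Fin N) : (r, x) ∈ p.2 ↔ x ∈ ({j} : Finset (Fin N)) :=
      ⟨fun hx => Finset.mem_singleton.2 (huniq x ⟨(hp.2.1 _ hx).2.2, hx⟩),
        fun hx => Finset.mem_singleton.1 hx ▸ hjp⟩
    refine ⟨⟨⟨j, hj⟩, ⟨S.restrict j p, restrict_mem_inducedTrees hp hC
      (disjointDescendants_singleton j) (Finset.mem_singleton_self j)⟩⟩, Subtype.ext ?_⟩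
    calc glue r {j} (fun _ => S.restrict j p) = glue r {j} (S.restrict · p) :=
          glue_congr fun x hx => by rw [Finset.mem_singleton.1 hx]
      _ = p := glue_restrict hp hC
  rw [← Nat.card_eq_of_bijective Φ ⟨hinj, hsurj⟩, Nat.card_sigma]
  exact Finset.sum_coe_sort (S.children r) fun j => Nat.card (S.inducedTrees j)

theorem card_inducedTrees_of_ne_sum {r : Fin N} (hr : S.kind r ≠ .sum)
    (hsep : S.DisjointDescendants (S.children r)) :
    Nat.card (S.inducedTrees r) = ∏ j ∈ S.children r, Nat.card (S.inducedTrees j) := by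
  let extend (g : ∀ j : S.children r, S.inducedTrees j) (j : Fin N) :
      Finset (Fin N) × Finset (Fin N × Fin N) :=
    if h : j ∈ S.children r then (g ⟨j, h⟩).1 else default
  have extend_of_mem (g) {j} (hj : j ∈ S.children r) : extend g j = (g ⟨j, hj⟩).1 :=
    dif_pos hj
  have hf (g) : ∀ j ∈ S.children r, extend g j ∈ S.inducedTrees j := fun j hj =>
    extend_of_mem g hj ▸ (g ⟨j, hj⟩).2
  let Ψ : (∀ j : S.children r, S.inducedTrees j) → S.inducedTrees r := fun g =>
    ⟨glue r (S.children r) (extend g),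
      glue_mem_inducedTrees subset_rfl hsep (hf g) (fun h => absurd h hr) fun _ => subset_rfl⟩
  have hinj : Ψ.Injective := by
    intro g g' h
    funext j
    apply Subtype.ext
    rw [← extend_of_mem g j.2, ← extend_of_mem g' j.2]
    exact eq_of_glue_eq subset_rfl hsep (hf g) (hf g') (congrArg Subtype.val h) j.2
  have hsurj : Ψ.Surjective := by
    rintro ⟨p, hp⟩
    have hC (x : Fin N) : (r, x) ∈ p.2 ↔ x ∈ S.children r := by
      refine ⟨fun hx => (hp.2.1 _ hx).2.2, fun hx => ?_⟩
      cases hk : S.kind r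
      · exact absurd hk hr
      · exact hp.2.2.2.1 r hp.1 hk x hx
      · simp [(S.leaf_iff r).1 hk] at hx
    let g : ∀ j : S.children r, S.inducedTrees j := fun j =>
      ⟨S.restrict j p, restrict_mem_inducedTrees hp hC hsep j.2⟩
    refine ⟨g, Subtype.ext ?_⟩
    calc glue r (S.children r) (extend g) = glue r (S.children r) (S.restrict · p) :=
          glue_congr fun j hj => extend_of_mem g hj
      _ = p := glue_restrict hp hC
  rw [← Nat.card_eq_of_bijective Ψ ⟨hinj, hsurj⟩, Nat.card_pi]
  exact Finset.prod_coe_sort (S.children r) fun j => Nat.card (S.inducedTrees j)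

theorem value_ones_eq_card_inducedTrees (hD : S.Decomposable) (r : Fin N) :
    S.value (fun _ => 1) (fun _ _ => 1) r = Nat.card (S.inducedTrees r) := by
  induction r using WellFoundedLT.induction with
  | _ r ih =>
    have ih' (j : S.children r) :
        S.value (fun _ => 1) (fun _ _ => 1) j = Nat.card (S.inducedTrees j) :=
      ih j (S.child_lt r j j.2)
    rw [value]
    cases hk : S.kind r with
    | sum =>
      simp only [one_mul, ih', card_inducedTrees_of_sum hk, Nat.cast_sum]
      exact Finset.sum_attach (S.children r) fun j => (Nat.card (S.inducedTrees j) : ℝ)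
    | prod =>
      have hr : S.kind r ≠ .sum := by simp [hk]
      simp only [ih', card_inducedTrees_of_ne_sum hr (hD.disjointDescendants_children hr),
        Nat.cast_prod]
      exact Finset.prod_attach (S.children r) fun j => (Nat.card (S.inducedTrees j) : ℝ)
    | leaf =>
      have hr : S.kind r ≠ .sum := by simp [hk]
      rw [card_inducedTrees_of_ne_sum hr (hD.disjointDescendants_children hr),
        (S.leaf_iff r).1 hk]
      simp

end SPN

theorem SPN.value_ones_eq_card_induced_trees_general {N n : ℕ} (S : SPN N n)
    (hD : S.Decomposable) :
    S.value (fun _ => 1) (fun _ _ => 1) S.root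
      = Nat.card {p : Finset (Fin N) × Finset (Fin N × Fin N) // S.IsInducedTree p.1 p.2} :=
  S.value_ones_eq_card_inducedTrees hD S.root

/-- For a complete and decomposable SPN, the root value evaluated with all sum
weights and all leaf values set to `1` equals the number of induced trees of the circuit. -/
theorem SPN.value_ones_eq_card_induced_trees {N n : ℕ} (S : SPN N n)
    (hC : S.Complete) (hD : S.Decomposable) :
    S.value (fun _ => 1) (fun _ _ => 1) S.root
      = Nat.card {p : Finset (Fin N) × Finset (Fin N × Fin N) // S.IsInducedTree p.1 p.2} :=
  SPN.value_ones_eq_card_induced_trees_general S hD
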